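/- arXiv:2204.05263 — 3 statements merged into one kernel-verified Lean document; each statement's English description precedes it below -/
import Mathlib

section
/- Cross-covariance matching between the controlled process and the reference process (key identity in the proof of Theorem 3, part (i)): let Σ̄₀ ∈ ℝ^{n×n} be symmetric, define Σ₀ := Σ̄₀ and Σ_{k+1} := A_{Q,k}Σ_kA_{Q,k}ᵀ + D_k, and define Ξ_k := Φ(k,0)Σ̄₀Φ(k,0)ᵀ + G_r(k,0) (with G_r(0,0) := 0). Then for every k ∈ {0,…,N}: Σ_kΦ_Q(0,k)ᵀ − Φ_Q(k,0)Σ̄₀ = Ξ_kΦ(0,k)ᵀ − Φ(k,0)Σ̄₀. -/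
open Matrix

noncomputable section

/-- `prodAux A l d = A (l+d-1) * ⋯ * A l` (the empty product for `d = 0`). -/
def prodAux {n : ℕ} (A : ℕ → Matrix (Fin n) (Fin n) ℝ) (l : ℕ) :
    ℕ → Matrix (Fin n) (Fin n) ℝ
  | 0 => 1
  | d + 1 => A (l + d) * prodAux A l d

/-- State-transition matrix `Φ(k,l)`: `A_{k-1} ⋯ A_l` for `k > l`, `I` for `k = l`,
and `A_k⁻¹ ⋯ A_{l-1}⁻¹` for `k < l`. -/
def Phi {n : ℕ} (A : ℕ → Matrix (Fin n) (Fin n) ℝ) (k l : ℕ) :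
    Matrix (Fin n) (Fin n) ℝ :=
  if l ≤ k then prodAux A l (k - l) else (prodAux A k (l - k))⁻¹

/-- Reachability Gramian `G_r(k₁,k₀) = Σ_{k=k₀}^{k₁−1} Φ(k₁,k+1) B_k B_kᵀ Φ(k₁,k+1)ᵀ`. -/
def Gr {n m : ℕ} (A : ℕ → Matrix (Fin n) (Fin n) ℝ) (B : ℕ → Matrix (Fin n) (Fin m) ℝ)
    (k₁ k₀ : ℕ) : Matrix (Fin n) (Fin n) ℝ :=
  ∑ k ∈ Finset.Ico k₀ k₁, Phi A k₁ (k+1) * B k * (B k)ᵀ * (Phi A k₁ (k+1))ᵀ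

/-- Controllability Gramian `G_c(k₁,k₀) = Σ_{k=k₀}^{k₁−1} Φ(k₀,k+1) B_k B_kᵀ Φ(k₀,k+1)ᵀ`. -/
def Gc {n m : ℕ} (A : ℕ → Matrix (Fin n) (Fin n) ℝ) (B : ℕ → Matrix (Fin n) (Fin m) ℝ)
    (k₁ k₀ : ℕ) : Matrix (Fin n) (Fin n) ℝ :=
  ∑ k ∈ Finset.Ico k₀ k₁, Phi A k₀ (k+1) * B k * (B k)ᵀ * (Phi A k₀ (k+1))ᵀ

/-- `H` is the Moore–Penrose inverse of `G`. -/
def IsMoorePenrose {n : ℕ} (G H : Matrix (Fin n) (Fin n) ℝ) : Prop :=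
  G * H * G = G ∧ H * G * H = H ∧ (G * H)ᵀ = G * H ∧ (H * G)ᵀ = H * G

/-- Reachability Gramian with general noise-covariance terms `M k`. -/
def GrM {n : ℕ} (A : ℕ → Matrix (Fin n) (Fin n) ℝ) (M : ℕ → Matrix (Fin n) (Fin n) ℝ)
    (k₁ k₀ : ℕ) : Matrix (Fin n) (Fin n) ℝ :=
  ∑ s ∈ Finset.Ico k₀ k₁, Phi A k₁ (s+1) * M s * (Phi A k₁ (s+1))ᵀ

/-- Controllability Gramian with general noise-covariance terms `M k`. -/
def GcM {n : ℕ} (A : ℕ → Matrix (Fin n) (Fin n) ℝ) (M : ℕ → Matrix (Fin n) (Fin n) ℝ)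
    (k₁ k₀ : ℕ) : Matrix (Fin n) (Fin n) ℝ :=
  ∑ s ∈ Finset.Ico k₀ k₁, Phi A k₀ (s+1) * M s * (Phi A k₀ (s+1))ᵀ

private lemma phi_zero_left {n : ℕ} (A : ℕ → Matrix (Fin n) (Fin n) ℝ) (k : ℕ) :
    Phi A k 0 = prodAux A 0 k := by simp [Phi]

private lemma phi_left_zero {n : ℕ} (A : ℕ → Matrix (Fin n) (Fin n) ℝ) (k : ℕ) :
    Phi A 0 k = (prodAux A 0 k)⁻¹ := by
  cases k with
  | zero => simp [Phi, prodAux]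
  | succ k => simp [Phi]

private lemma phi_succ_left {n : ℕ} (A : ℕ → Matrix (Fin n) (Fin n) ℝ) {k l : ℕ}
    (h : l ≤ k) : Phi A (k+1) l = A k * Phi A k l := by
  unfold Phi
  rw [if_pos (Nat.le_succ_of_le h), if_pos h]
  have h1 : k + 1 - l = (k - l) + 1 := by omega
  have h2 : l + (k - l) = k := by omega
  rw [h1]
  simp [prodAux, h2]

private lemma grM_succ {n : ℕ} (A M : ℕ → Matrix (Fin n) (Fin n) ℝ) (k : ℕ) :
    GrM A M (k+1) 0 = A k * GrM A M k 0 * (A k)ᵀ + M k := by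
  have h1 : Phi A (k+1) (k+1) = 1 := by simp [Phi, prodAux]
  unfold GrM
  rw [Finset.sum_Ico_succ_top (Nat.zero_le k), h1]
  simp only [Matrix.one_mul, Matrix.transpose_one, Matrix.mul_one]
  congr 1
  rw [Finset.mul_sum, Finset.sum_mul]
  apply Finset.sum_congr rfl
  intro s hs
  have hsk : s + 1 ≤ k := Nat.succ_le_of_lt (Finset.mem_Ico.mp hs).2
  rw [phi_succ_left A hsk, Matrix.transpose_mul]
  simp only [Matrix.mul_assoc]

/-- Cross-covariance matching between the controlled process and the reference process. -/
theorem stmt16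
    {n m N : ℕ} (hn : 0 < n) (hm : 0 < m) (hN : 0 < N)
    (A : ℕ → Matrix (Fin n) (Fin n) ℝ) (B : ℕ → Matrix (Fin n) (Fin m) ℝ)
    (hA : ∀ k < N, IsUnit (A k).det)
    (Q : ℕ → Matrix (Fin n) (Fin n) ℝ)
    (hQsym : ∀ k ≤ N, (Q k)ᵀ = Q k) (hQinv : ∀ k ≤ N, IsUnit (Q k).det)
    (hQrec : ∀ k < N, Q (k+1) = A k * Q k * (A k)ᵀ - B k * (B k)ᵀ)
    (hIB : ∀ k < N,
      IsUnit ((1 : Matrix (Fin m) (Fin m) ℝ) + (B k)ᵀ * (Q (k+1))⁻¹ * B k).det)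
    (D : ℕ → Matrix (Fin n) (Fin n) ℝ)
    (hD : ∀ k, D k = B k *
      ((1 : Matrix (Fin m) (Fin m) ℝ) + (B k)ᵀ * (Q (k+1))⁻¹ * B k)⁻¹ * (B k)ᵀ)
    (AQ : ℕ → Matrix (Fin n) (Fin n) ℝ)
    (hAQ : ∀ k, AQ k = A k - B k *
      ((1 : Matrix (Fin m) (Fin m) ℝ) + (B k)ᵀ * (Q (k+1))⁻¹ * B k)⁻¹ *
      (B k)ᵀ * (Q (k+1))⁻¹ * A k)
    (Sig0 : Matrix (Fin n) (Fin n) ℝ) (hSig0 : Sig0ᵀ = Sig0)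
    (Sg : ℕ → Matrix (Fin n) (Fin n) ℝ)
    (hSg0 : Sg 0 = Sig0)
    (hSgrec : ∀ k < N, Sg (k+1) = AQ k * Sg k * (AQ k)ᵀ + D k) :
    ∀ k ≤ N,
      Sg k * (Phi AQ 0 k)ᵀ - Phi AQ k 0 * Sig0
        = (Phi A k 0 * Sig0 * (Phi A k 0)ᵀ
            + GrM A (fun s => B s * (B s)ᵀ) k 0) * (Phi A 0 k)ᵀ
          - Phi A k 0 * Sig0 := by
  have hQinvT : ∀ k ≤ N, ((Q k)⁻¹)ᵀ = (Q k)⁻¹ := by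
    intro k hk
    rw [Matrix.transpose_nonsing_inv, hQsym k hk]
  have hAQ' : ∀ k, AQ k = A k - D k * (Q (k+1))⁻¹ * A k := by
    intro k; rw [hAQ k, hD k]
  have keyBB : ∀ k < N, D k + D k * (Q (k+1))⁻¹ * (B k * (B k)ᵀ) = B k * (B k)ᵀ := by
    intro k hk
    have hM := Matrix.nonsing_inv_mul _ (hIB k hk)
    calc D k + D k * (Q (k+1))⁻¹ * (B k * (B k)ᵀ)
        = B k * (((1 : Matrix (Fin m) (Fin m) ℝ) + (B k)ᵀ * (Q (k+1))⁻¹ * B k)⁻¹ *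
            ((1 : Matrix (Fin m) (Fin m) ℝ) + (B k)ᵀ * (Q (k+1))⁻¹ * B k)) * (B k)ᵀ := by
          rw [hD k]
          simp only [Matrix.mul_add, Matrix.add_mul, Matrix.mul_one, Matrix.mul_assoc]
      _ = B k * (B k)ᵀ := by rw [hM, Matrix.mul_one]
  have haQa : ∀ k < N, A k * Q k * (A k)ᵀ = Q (k+1) + B k * (B k)ᵀ := by
    intro k hk; rw [hQrec k hk]; abel
  have hAQQ : ∀ k < N, AQ k * Q k * (A k)ᵀ = Q (k+1) := by
    intro k hk
    have h1 : (Q (k+1))⁻¹ * Q (k+1) = 1 := Matrix.nonsing_inv_mul _ (hQinv (k+1) hk)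
    calc AQ k * Q k * (A k)ᵀ
        = A k * Q k * (A k)ᵀ - D k * ((Q (k+1))⁻¹ * (A k * Q k * (A k)ᵀ)) := by
          rw [hAQ' k]
          simp only [Matrix.sub_mul, Matrix.mul_assoc]
      _ = (Q (k+1) + B k * (B k)ᵀ)
          - D k * ((Q (k+1))⁻¹ * (Q (k+1) + B k * (B k)ᵀ)) := by
          rw [haQa k hk]
      _ = Q (k+1) + B k * (B k)ᵀ
          - (D k * ((Q (k+1))⁻¹ * Q (k+1)) + D k * (Q (k+1))⁻¹ * (B k * (B k)ᵀ)) := by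
          simp only [Matrix.mul_add, Matrix.mul_assoc]
      _ = Q (k+1) + B k * (B k)ᵀ
          - (D k + D k * (Q (k+1))⁻¹ * (B k * (B k)ᵀ)) := by
          rw [h1, Matrix.mul_one]
      _ = Q (k+1) := by rw [keyBB k hk]; abel
  have hPu : ∀ k ≤ N, IsUnit (prodAux A 0 k).det := by
    intro k
    induction k with
    | zero => intro _; simp [prodAux]
    | succ k ih =>
      intro hk
      have h1 : prodAux A 0 (k+1) = A k * prodAux A 0 k := by simp [prodAux]
      rw [h1, Matrix.det_mul]
      exact (hA k hk).mul (ih (Nat.le_of_succ_le hk))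
  have hPQb : ∀ k ≤ N, prodAux AQ 0 k * Q 0 * (prodAux A 0 k)ᵀ = Q k := by
    intro k
    induction k with
    | zero => intro _; simp [prodAux]
    | succ k ih =>
      intro hk
      have ih' := ih (Nat.le_of_succ_le hk)
      have h1 : prodAux AQ 0 (k+1) = AQ k * prodAux AQ 0 k := by simp [prodAux]
      have h2 : prodAux A 0 (k+1) = A k * prodAux A 0 k := by simp [prodAux]
      calc prodAux AQ 0 (k+1) * Q 0 * (prodAux A 0 (k+1))ᵀ
          = AQ k * (prodAux AQ 0 k * Q 0 * (prodAux A 0 k)ᵀ) * (A k)ᵀ := by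
            rw [h1, h2, Matrix.transpose_mul]
            simp only [Matrix.mul_assoc]
        _ = AQ k * Q k * (A k)ᵀ := by rw [ih']
        _ = Q (k+1) := hAQQ k hk
  have hQG : ∀ k ≤ N, prodAux A 0 k * Q 0 * (prodAux A 0 k)ᵀ
      = Q k + GrM A (fun s => B s * (B s)ᵀ) k 0 := by
    intro k
    induction k with
    | zero => intro _; simp [prodAux, GrM]
    | succ k ih =>
      intro hk
      have ih' := ih (Nat.le_of_succ_le hk)
      have h2 : prodAux A 0 (k+1) = A k * prodAux A 0 k := by simp [prodAux]
      have hGs : GrM A (fun s => B s * (B s)ᵀ) (k+1) 0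
          = A k * GrM A (fun s => B s * (B s)ᵀ) k 0 * (A k)ᵀ + B k * (B k)ᵀ := by
        simpa using grM_succ A (fun s => B s * (B s)ᵀ) k
      calc prodAux A 0 (k+1) * Q 0 * (prodAux A 0 (k+1))ᵀ
          = A k * (prodAux A 0 k * Q 0 * (prodAux A 0 k)ᵀ) * (A k)ᵀ := by
            rw [h2, Matrix.transpose_mul]
            simp only [Matrix.mul_assoc]
        _ = A k * (Q k + GrM A (fun s => B s * (B s)ᵀ) k 0) * (A k)ᵀ := by rw [ih']
        _ = A k * Q k * (A k)ᵀ + A k * GrM A (fun s => B s * (B s)ᵀ) k 0 * (A k)ᵀ := by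
            simp only [Matrix.add_mul, Matrix.mul_add, Matrix.mul_assoc]
        _ = Q (k+1) + (A k * GrM A (fun s => B s * (B s)ᵀ) k 0 * (A k)ᵀ
              + B k * (B k)ᵀ) := by rw [haQa k hk]; abel
        _ = Q (k+1) + GrM A (fun s => B s * (B s)ᵀ) (k+1) 0 := by rw [hGs]
  have hAQu : ∀ k < N, IsUnit (AQ k).det := by
    intro k hk
    have h := congrArg Matrix.det (hAQQ k hk)
    rw [Matrix.det_mul, Matrix.det_mul] at h
    have h2 : IsUnit ((AQ k).det * (Q k).det * ((A k)ᵀ).det) := by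
      rw [h]; exact hQinv (k+1) hk
    exact isUnit_of_mul_isUnit_left (isUnit_of_mul_isUnit_left h2)
  have hF10 : ∀ k < N, ((AQ k)⁻¹)ᵀ = (Q (k+1))⁻¹ * (A k * Q k) := by
    intro k hk
    have hinv : (AQ k)⁻¹ = Q k * (A k)ᵀ * (Q (k+1))⁻¹ := by
      apply Matrix.inv_eq_right_inv
      calc AQ k * (Q k * (A k)ᵀ * (Q (k+1))⁻¹)
          = (AQ k * Q k * (A k)ᵀ) * (Q (k+1))⁻¹ := by simp only [Matrix.mul_assoc]
        _ = Q (k+1) * (Q (k+1))⁻¹ := by rw [hAQQ k hk]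
        _ = 1 := Matrix.mul_nonsing_inv _ (hQinv (k+1) hk)
    rw [hinv, Matrix.transpose_mul, Matrix.transpose_mul, Matrix.transpose_transpose,
      hQinvT (k+1) hk, hQsym k (le_of_lt hk)]
  have hF2g : ∀ k ≤ N, ((prodAux AQ 0 k)⁻¹)ᵀ = (Q k)⁻¹ * (prodAux A 0 k * Q 0) := by
    intro k hk
    have hinv : (prodAux AQ 0 k)⁻¹ = Q 0 * (prodAux A 0 k)ᵀ * (Q k)⁻¹ := by
      apply Matrix.inv_eq_right_inv
      calc prodAux AQ 0 k * (Q 0 * (prodAux A 0 k)ᵀ * (Q k)⁻¹)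
          = (prodAux AQ 0 k * Q 0 * (prodAux A 0 k)ᵀ) * (Q k)⁻¹ := by
            simp only [Matrix.mul_assoc]
        _ = Q k * (Q k)⁻¹ := by rw [hPQb k hk]
        _ = 1 := Matrix.mul_nonsing_inv _ (hQinv k hk)
    rw [hinv, Matrix.transpose_mul, Matrix.transpose_mul, Matrix.transpose_transpose,
      hQinvT k hk, hQsym 0 (Nat.zero_le N)]
  have hF6 : ∀ k < N,
      D k * ((Q (k+1))⁻¹ * (A k * Q k)) = B k * (B k)ᵀ * ((A k)⁻¹)ᵀ := by
    intro k hk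
    have hQQ : (Q (k+1))⁻¹ * Q (k+1) = 1 := Matrix.nonsing_inv_mul _ (hQinv (k+1) hk)
    have hau : IsUnit ((A k)ᵀ).det := by rw [Matrix.det_transpose]; exact hA k hk
    have h1 : D k * ((Q (k+1))⁻¹ * (A k * Q k)) * (A k)ᵀ = B k * (B k)ᵀ := by
      calc D k * ((Q (k+1))⁻¹ * (A k * Q k)) * (A k)ᵀ
          = D k * ((Q (k+1))⁻¹ * (A k * Q k * (A k)ᵀ)) := by
            simp only [Matrix.mul_assoc]
        _ = D k * ((Q (k+1))⁻¹ * (Q (k+1) + B k * (B k)ᵀ)) := by rw [haQa k hk]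
        _ = D k * ((Q (k+1))⁻¹ * Q (k+1)) + D k * (Q (k+1))⁻¹ * (B k * (B k)ᵀ) := by
            simp only [Matrix.mul_add, Matrix.mul_assoc]
        _ = D k + D k * (Q (k+1))⁻¹ * (B k * (B k)ᵀ) := by rw [hQQ, Matrix.mul_one]
        _ = B k * (B k)ᵀ := keyBB k hk
    calc D k * ((Q (k+1))⁻¹ * (A k * Q k))
        = D k * ((Q (k+1))⁻¹ * (A k * Q k)) * ((A k)ᵀ * ((A k)ᵀ)⁻¹) := by
          rw [Matrix.mul_nonsing_inv _ hau, Matrix.mul_one]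
      _ = (D k * ((Q (k+1))⁻¹ * (A k * Q k)) * (A k)ᵀ) * ((A k)ᵀ)⁻¹ := by
          simp only [Matrix.mul_assoc]
      _ = B k * (B k)ᵀ * ((A k)ᵀ)⁻¹ := by rw [h1]
      _ = B k * (B k)ᵀ * ((A k)⁻¹)ᵀ := by rw [Matrix.transpose_nonsing_inv]
  suffices key : ∀ k, k ≤ N →
      Sg k * ((prodAux AQ 0 k)⁻¹)ᵀ
        = prodAux AQ 0 k * Sig0
          + GrM A (fun s => B s * (B s)ᵀ) k 0 * ((prodAux A 0 k)⁻¹)ᵀ by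
    intro k hk
    have hF9k : (prodAux A 0 k)ᵀ * ((prodAux A 0 k)⁻¹)ᵀ = 1 := by
      rw [← Matrix.transpose_mul, Matrix.nonsing_inv_mul _ (hPu k hk),
        Matrix.transpose_one]
    rw [phi_left_zero AQ k, phi_zero_left AQ k, phi_left_zero A k, phi_zero_left A k,
      key k hk]
    calc prodAux AQ 0 k * Sig0
          + GrM A (fun s => B s * (B s)ᵀ) k 0 * ((prodAux A 0 k)⁻¹)ᵀ
          - prodAux AQ 0 k * Sig0
        = GrM A (fun s => B s * (B s)ᵀ) k 0 * ((prodAux A 0 k)⁻¹)ᵀ := by abel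
      _ = prodAux A 0 k * Sig0 * ((prodAux A 0 k)ᵀ * ((prodAux A 0 k)⁻¹)ᵀ)
          + GrM A (fun s => B s * (B s)ᵀ) k 0 * ((prodAux A 0 k)⁻¹)ᵀ
          - prodAux A 0 k * Sig0 := by rw [hF9k, Matrix.mul_one]; abel
      _ = (prodAux A 0 k * Sig0 * (prodAux A 0 k)ᵀ
            + GrM A (fun s => B s * (B s)ᵀ) k 0) * ((prodAux A 0 k)⁻¹)ᵀ
          - prodAux A 0 k * Sig0 := by
          simp only [Matrix.add_mul, Matrix.mul_assoc]
  intro k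
  induction k with
  | zero =>
    intro _
    simp [prodAux, GrM, hSg0, inv_one]
  | succ k ih =>
    intro hk
    have hkN : k < N := hk
    have hkle : k ≤ N := Nat.le_of_succ_le hk
    have IH := ih hkle
    have hpq : prodAux AQ 0 (k+1) = AQ k * prodAux AQ 0 k := by simp [prodAux]
    have hp : prodAux A 0 (k+1) = A k * prodAux A 0 k := by simp [prodAux]
    have hF1k : (AQ k)ᵀ * ((AQ k)⁻¹)ᵀ = 1 := by
      rw [← Matrix.transpose_mul, Matrix.nonsing_inv_mul _ (hAQu k hkN),
        Matrix.transpose_one]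
    have hF7k : (A k)ᵀ * ((A k)⁻¹)ᵀ = 1 := by
      rw [← Matrix.transpose_mul, Matrix.nonsing_inv_mul _ (hA k hkN),
        Matrix.transpose_one]
    have hF9k : (prodAux A 0 k)ᵀ * ((prodAux A 0 k)⁻¹)ᵀ = 1 := by
      rw [← Matrix.transpose_mul, Matrix.nonsing_inv_mul _ (hPu k hkle),
        Matrix.transpose_one]
    have hQQ : Q k * (Q k)⁻¹ = 1 := Matrix.mul_nonsing_inv _ (hQinv k hkle)
    have hq2 : AQ k + D k * (Q (k+1))⁻¹ * A k = A k := by rw [hAQ' k]; abel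
    have hpkQ0 : prodAux A 0 k * Q 0
        = (Q k + GrM A (fun s => B s * (B s)ᵀ) k 0) * ((prodAux A 0 k)⁻¹)ᵀ := by
      calc prodAux A 0 k * Q 0
          = prodAux A 0 k * Q 0 * ((prodAux A 0 k)ᵀ * ((prodAux A 0 k)⁻¹)ᵀ) := by
            rw [hF9k, Matrix.mul_one]
        _ = (prodAux A 0 k * Q 0 * (prodAux A 0 k)ᵀ) * ((prodAux A 0 k)⁻¹)ᵀ := by
            simp only [Matrix.mul_assoc]
        _ = (Q k + GrM A (fun s => B s * (B s)ᵀ) k 0) * ((prodAux A 0 k)⁻¹)ᵀ := by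
            rw [hQG k hkle]
    have hGs : GrM A (fun s => B s * (B s)ᵀ) (k+1) 0
        = A k * GrM A (fun s => B s * (B s)ᵀ) k 0 * (A k)ᵀ + B k * (B k)ᵀ := by
      simpa using grM_succ A (fun s => B s * (B s)ᵀ) k
    have hR : prodAux AQ 0 (k+1) * Sig0
        + GrM A (fun s => B s * (B s)ᵀ) (k+1) 0 * ((prodAux A 0 (k+1))⁻¹)ᵀ
        = AQ k * (prodAux AQ 0 k * Sig0)
          + A k * (GrM A (fun s => B s * (B s)ᵀ) k 0 * ((prodAux A 0 k)⁻¹)ᵀ)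
          + B k * (B k)ᵀ * ((A k)⁻¹)ᵀ * ((prodAux A 0 k)⁻¹)ᵀ := by
      calc prodAux AQ 0 (k+1) * Sig0
          + GrM A (fun s => B s * (B s)ᵀ) (k+1) 0 * ((prodAux A 0 (k+1))⁻¹)ᵀ
          = AQ k * prodAux AQ 0 k * Sig0
            + (A k * GrM A (fun s => B s * (B s)ᵀ) k 0 * (A k)ᵀ + B k * (B k)ᵀ)
              * (((A k)⁻¹)ᵀ * ((prodAux A 0 k)⁻¹)ᵀ) := by
            rw [hpq, hp, hGs, Matrix.mul_inv_rev, Matrix.transpose_mul]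
        _ = AQ k * (prodAux AQ 0 k * Sig0)
            + A k * (GrM A (fun s => B s * (B s)ᵀ) k 0
              * (((A k)ᵀ * ((A k)⁻¹)ᵀ) * ((prodAux A 0 k)⁻¹)ᵀ))
            + B k * (B k)ᵀ * ((A k)⁻¹)ᵀ * ((prodAux A 0 k)⁻¹)ᵀ := by
            simp only [Matrix.add_mul, Matrix.mul_assoc, add_assoc]
        _ = AQ k * (prodAux AQ 0 k * Sig0)
            + A k * (GrM A (fun s => B s * (B s)ᵀ) k 0 * ((prodAux A 0 k)⁻¹)ᵀ)
            + B k * (B k)ᵀ * ((A k)⁻¹)ᵀ * ((prodAux A 0 k)⁻¹)ᵀ := by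
            rw [hF7k, Matrix.one_mul]
    calc Sg (k+1) * ((prodAux AQ 0 (k+1))⁻¹)ᵀ
        = (AQ k * Sg k * (AQ k)ᵀ + D k)
          * (((AQ k)⁻¹)ᵀ * ((prodAux AQ 0 k)⁻¹)ᵀ) := by
          rw [hSgrec k hkN, hpq, Matrix.mul_inv_rev, Matrix.transpose_mul]
      _ = AQ k * (Sg k * (((AQ k)ᵀ * ((AQ k)⁻¹)ᵀ) * ((prodAux AQ 0 k)⁻¹)ᵀ))
          + D k * (((AQ k)⁻¹)ᵀ * ((prodAux AQ 0 k)⁻¹)ᵀ) := by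
          simp only [Matrix.add_mul, Matrix.mul_assoc]
      _ = AQ k * (Sg k * ((prodAux AQ 0 k)⁻¹)ᵀ)
          + D k * (((AQ k)⁻¹)ᵀ * ((prodAux AQ 0 k)⁻¹)ᵀ) := by
          rw [hF1k, Matrix.one_mul]
      _ = AQ k * (prodAux AQ 0 k * Sig0
            + GrM A (fun s => B s * (B s)ᵀ) k 0 * ((prodAux A 0 k)⁻¹)ᵀ)
          + D k * (((Q (k+1))⁻¹ * (A k * Q k))
            * ((Q k)⁻¹ * (prodAux A 0 k * Q 0))) := by
          rw [IH, hF10 k hkN, hF2g k hkle]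
      _ = AQ k * (prodAux AQ 0 k * Sig0)
          + AQ k * (GrM A (fun s => B s * (B s)ᵀ) k 0 * ((prodAux A 0 k)⁻¹)ᵀ)
          + D k * ((Q (k+1))⁻¹ * (A k * ((Q k * (Q k)⁻¹)
            * (prodAux A 0 k * Q 0)))) := by
          simp only [Matrix.mul_add, Matrix.mul_assoc, add_assoc]
      _ = AQ k * (prodAux AQ 0 k * Sig0)
          + AQ k * (GrM A (fun s => B s * (B s)ᵀ) k 0 * ((prodAux A 0 k)⁻¹)ᵀ)
          + D k * ((Q (k+1))⁻¹ * (A k * (prodAux A 0 k * Q 0))) := by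
          rw [hQQ, Matrix.one_mul]
      _ = AQ k * (prodAux AQ 0 k * Sig0)
          + AQ k * (GrM A (fun s => B s * (B s)ᵀ) k 0 * ((prodAux A 0 k)⁻¹)ᵀ)
          + D k * ((Q (k+1))⁻¹ * (A k * ((Q k + GrM A (fun s => B s * (B s)ᵀ) k 0)
            * ((prodAux A 0 k)⁻¹)ᵀ))) := by
          rw [hpkQ0]
      _ = AQ k * (prodAux AQ 0 k * Sig0)
          + (AQ k + D k * (Q (k+1))⁻¹ * A k)
            * (GrM A (fun s => B s * (B s)ᵀ) k 0 * ((prodAux A 0 k)⁻¹)ᵀ)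
          + D k * ((Q (k+1))⁻¹ * (A k * Q k)) * ((prodAux A 0 k)⁻¹)ᵀ := by
          simp only [Matrix.mul_add, Matrix.add_mul, Matrix.mul_assoc]
          abel
      _ = AQ k * (prodAux AQ 0 k * Sig0)
          + A k * (GrM A (fun s => B s * (B s)ᵀ) k 0 * ((prodAux A 0 k)⁻¹)ᵀ)
          + B k * (B k)ᵀ * ((A k)⁻¹)ᵀ * ((prodAux A 0 k)⁻¹)ᵀ := by
          rw [hq2, hF6 k hkN]
      _ = prodAux AQ 0 (k+1) * Sig0
          + GrM A (fun s => B s * (B s)ᵀ) (k+1) 0 * ((prodAux A 0 (k+1))⁻¹)ᵀ :=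
          hR.symm

end
end

section
/- Controllability-Gramian matching between the original and closed-loop systems (identity (eq:R1_R2) in the proof of Theorem 3, part (ii)): for every k ∈ {0,…,N}, Φ(N,k)G_c(N,k) = Φ_Q(N,k)G_{Q,c}(N,k), where G_c(N,k) := Σ_{s=k}^{N−1}Φ(k,s+1)B_sB_sᵀΦ(k,s+1)ᵀ and G_{Q,c}(N,k) := Σ_{s=k}^{N−1}Φ_Q(k,s+1)D_sΦ_Q(k,s+1)ᵀ (both taken to be 0 when k = N). Equivalently, J_k := G_c(N,k) + G_c(N,k)Q_k⁻¹G_{Q,c}(N,k) − G_{Q,c}(N,k) = 0 for all k. -/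
open Matrix

noncomputable section

section Aux

variable {n : ℕ} (C : ℕ → Matrix (Fin n) (Fin n) ℝ)

lemma phi_self (k : ℕ) : Phi C k k = 1 := by
  simp [Phi, prodAux]

lemma phi_succ {k l : ℕ} (h : l ≤ k) : Phi C (k+1) l = C k * Phi C k l := by
  unfold Phi
  rw [if_pos (by omega : l ≤ k+1), if_pos h]
  have h1 : k + 1 - l = (k - l) + 1 := by omega
  rw [h1]
  show C (l + (k-l)) * prodAux C l (k-l) = _
  rw [Nat.add_sub_cancel' h]

lemma phi_det {k K : ℕ} (hC : ∀ j, k ≤ j → j < K → IsUnit (C j).det) :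
    ∀ j, k ≤ j → j ≤ K → IsUnit (Phi C j k).det := by
  intro j hj hjK
  induction j, hj using Nat.le_induction with
  | base => simp [phi_self]
  | succ j hj ih =>
    rw [phi_succ C hj, Matrix.det_mul]
    exact (hC j hj (by omega)).mul (ih (by omega))

lemma phi_chain {k j K : ℕ} (hkj : k ≤ j) (hjK : j ≤ K) :
    Phi C K k = Phi C K j * Phi C j k := by
  induction K, hjK using Nat.le_induction with
  | base => rw [phi_self, one_mul]
  | succ K hK ih =>
    rw [phi_succ C (le_trans hkj hK), ih, phi_succ C hK, mul_assoc]

lemma phi_inv {k j : ℕ} (h : k ≤ j) : Phi C k j = (Phi C j k)⁻¹ := by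
  rcases eq_or_lt_of_le h with rfl | h
  · rw [phi_self, inv_one]
  · unfold Phi
    rw [if_neg (by omega), if_pos (le_of_lt h)]

/-- Lyapunov-type telescoping identity. -/
lemma gram_rec (Q M : ℕ → Matrix (Fin n) (Fin n) ℝ) {k K : ℕ} (hkK : k ≤ K)
    (hrec : ∀ j, k ≤ j → j < K → Q (j+1) = C j * Q j * (C j)ᵀ + M j) :
    Q K = Phi C K k * Q k * (Phi C K k)ᵀ + GrM C M K k := by
  induction K, hkK using Nat.le_induction with
  | base => simp [phi_self, GrM]
  | succ K hK ih =>
    have ih' := ih (fun j hj hjK => hrec j hj (by omega))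
    have hsum : GrM C M (K+1) k = C K * GrM C M K k * (C K)ᵀ + M K := by
      unfold GrM
      rw [Finset.sum_Ico_succ_top hK, phi_self, one_mul, transpose_one, mul_one]
      congr 1
      rw [Finset.mul_sum, Finset.sum_mul]
      refine Finset.sum_congr rfl fun s hs => ?_
      have hs' : s + 1 ≤ K := (Finset.mem_Ico.mp hs).2
      rw [phi_succ C hs', transpose_mul]
      noncomm_ring
    rw [hsum, hrec K hK (by omega), ih', phi_succ C hK, transpose_mul]
    noncomm_ring

lemma gcm_eq (M : ℕ → Matrix (Fin n) (Fin n) ℝ) {k K : ℕ} (hkK : k ≤ K)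
    (hC : ∀ j, k ≤ j → j < K → IsUnit (C j).det) :
    GcM C M K k = (Phi C K k)⁻¹ * GrM C M K k * ((Phi C K k)ᵀ)⁻¹ := by
  unfold GcM GrM
  rw [Finset.mul_sum, Finset.sum_mul]
  refine Finset.sum_congr rfl fun s hs => ?_
  obtain ⟨hks, hsK⟩ := Finset.mem_Ico.mp hs
  have h1 : k ≤ s + 1 := by omega
  have h2 : s + 1 ≤ K := hsK
  have hchain := phi_chain C h1 h2
  have hdet1 : IsUnit (Phi C K (s+1)).det :=
    phi_det C (fun j hj hjK => hC j (by omega) hjK) K h2 le_rfl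
  have hkey : Phi C k (s+1) = (Phi C K k)⁻¹ * Phi C K (s+1) := by
    rw [phi_inv C h1, hchain, Matrix.mul_inv_rev, mul_assoc,
      Matrix.nonsing_inv_mul _ hdet1, mul_one]
  rw [hkey, transpose_mul, Matrix.transpose_nonsing_inv]
  noncomm_ring

lemma GrM_neg (M : ℕ → Matrix (Fin n) (Fin n) ℝ) (K k : ℕ) :
    GrM C (fun s => -(M s)) K k = -(GrM C M K k) := by
  simp [GrM, mul_neg, neg_mul, Finset.sum_neg_distrib]

/-- abstract algebra for goal 2 -/
lemma alg2 {R : Type*} [Ring R] (qk qki x y : R) (hxy : x*y = 1)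
    (h1 : qk*qki = 1) (h2 : qki*qk = 1) :
    (qk - x) + (qk - x)*qki*(qk*y*qk - qk) - (qk*y*qk - qk) = 0 := by
  have h3 : x * qki * qk = x := by rw [mul_assoc, h2, mul_one]
  have h4 : x * qki * (qk*y*qk) = qk := by
    rw [show qk*y*qk = qk*(y*qk) from mul_assoc _ _ _, ← mul_assoc (x*qki) qk (y*qk),
      h3, ← mul_assoc, hxy, one_mul]
  have h5 : qk * qki * qk = qk := by rw [h1, one_mul]
  have h6 : qk * qki * (qk*y*qk) = qk*y*qk := by rw [h1, one_mul]
  have e : (qk - x)*qki*(qk*y*qk - qk) = (qk*y*qk - qk) - (qk - x) := by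
    rw [mul_sub, sub_mul, sub_mul, sub_mul, h3, h4, h5, h6]
  rw [e]; abel

/-- abstract algebra for goal 1 -/
lemma alg1 {R : Type*} [Ring R] (f fi ft fti qk qki qN qNi : R)
    (hf : f*fi = 1) (hft2 : fti*ft = 1) (hqk2 : qki*qk = 1) (hqN : qN*qNi = 1) :
    f * (qk - fi*qN*fti) = (qN*fti*qki) * (qk*(ft*qNi*f)*qk - qk) := by
  have l1 : f * (fi*qN*fti) = qN*fti := by
    rw [← mul_assoc, ← mul_assoc, hf, one_mul]
  have l2 : qN*fti*qki * (qk*(ft*qNi*f)*qk) = f * qk := by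
    have e : qN*fti*qki*(qk*(ft*qNi*f)*qk) = qN*(fti*(qki*qk)*ft)*qNi*(f*qk) := by
      noncomm_ring
    rw [e, hqk2, mul_one, hft2, mul_one, ← mul_assoc, hqN, one_mul]
  have l3 : qN*fti*qki*qk = qN*fti := by rw [mul_assoc, hqk2, mul_one]
  rw [mul_sub, l1, mul_sub, l2, l3]

/-- sandwich algebra -/
lemma alg3 {R : Type*} [Ring R] (pi p pt pti qN qk : R)
    (h1 : pi*p = 1) (h2 : pt*pti = 1) :
    pi*(p*qk*pt - qN)*pti = qk - pi*qN*pti := by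
  have e : pi*(p*qk*pt - qN)*pti = (pi*p)*qk*(pt*pti) - pi*qN*pti := by noncomm_ring
  rw [e, h1, h2, one_mul, mul_one]

lemma alg4 {R : Type*} [Ring R] (pi p pt pti qN qk : R)
    (h1 : pi*p = 1) (h2 : pt*pti = 1) :
    pi*(qN - p*qk*pt)*pti = pi*qN*pti - qk := by
  have e : pi*(qN - p*qk*pt)*pti = pi*qN*pti - (pi*p)*qk*(pt*pti) := by noncomm_ring
  rw [e, h1, h2, one_mul, mul_one]

end Aux

/-- Controllability-Gramian matching between the original and closed-loop systems. -/
theorem stmt17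
    {n m N : ℕ} (hn : 0 < n) (hm : 0 < m) (hN : 0 < N)
    (A : ℕ → Matrix (Fin n) (Fin n) ℝ) (B : ℕ → Matrix (Fin n) (Fin m) ℝ)
    (hA : ∀ k < N, IsUnit (A k).det)
    (Q : ℕ → Matrix (Fin n) (Fin n) ℝ)
    (hQsym : ∀ k ≤ N, (Q k)ᵀ = Q k) (hQinv : ∀ k ≤ N, IsUnit (Q k).det)
    (hQrec : ∀ k < N, Q (k+1) = A k * Q k * (A k)ᵀ - B k * (B k)ᵀ)
    (hIB : ∀ k < N,
      IsUnit ((1 : Matrix (Fin m) (Fin m) ℝ) + (B k)ᵀ * (Q (k+1))⁻¹ * B k).det)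
    (D : ℕ → Matrix (Fin n) (Fin n) ℝ)
    (hD : ∀ k, D k = B k *
      ((1 : Matrix (Fin m) (Fin m) ℝ) + (B k)ᵀ * (Q (k+1))⁻¹ * B k)⁻¹ * (B k)ᵀ)
    (AQ : ℕ → Matrix (Fin n) (Fin n) ℝ)
    (hAQ : ∀ k, AQ k = A k - B k *
      ((1 : Matrix (Fin m) (Fin m) ℝ) + (B k)ᵀ * (Q (k+1))⁻¹ * B k)⁻¹ *
      (B k)ᵀ * (Q (k+1))⁻¹ * A k)
     :
    ∀ k ≤ N,
      Phi A N k * GcM A (fun s => B s * (B s)ᵀ) N k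
          = Phi AQ N k * GcM AQ D N k ∧
      GcM A (fun s => B s * (B s)ᵀ) N k
          + GcM A (fun s => B s * (B s)ᵀ) N k * (Q k)⁻¹ * GcM AQ D N k
          - GcM AQ D N k = 0 := by
  -- key pointwise facts about AQ and D
  have key : ∀ j < N,
      (AQ j = Q (j+1) * ((A j)ᵀ)⁻¹ * (Q j)⁻¹) ∧
      (Q (j+1) = AQ j * Q j * (AQ j)ᵀ + D j) ∧
      IsUnit (AQ j).det := by
    intro j hj
    have hQj : IsUnit (Q j).det := hQinv j (le_of_lt hj)
    have hQj1 : IsUnit (Q (j+1)).det := hQinv (j+1) hj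
    have hAj : IsUnit (A j).det := hA j hj
    have hAjT : IsUnit ((A j)ᵀ).det := by rwa [Matrix.det_transpose]
    have hR : A j * Q j * (A j)ᵀ = Q (j+1) + B j * (B j)ᵀ := by
      rw [hQrec j hj, sub_add_cancel]
    have hRdet : IsUnit (A j * Q j * (A j)ᵀ).det := by
      rw [Matrix.det_mul, Matrix.det_mul]
      exact (hAj.mul hQj).mul hAjT
    have hU : (A j * Q j * (A j)ᵀ) * (Q (j+1))⁻¹
        = 1 + B j * (B j)ᵀ * (Q (j+1))⁻¹ := by
      rw [hR, add_mul, Matrix.mul_nonsing_inv _ hQj1]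
    have hUdet : IsUnit ((A j * Q j * (A j)ᵀ) * (Q (j+1))⁻¹).det := by
      rw [Matrix.det_mul]
      exact hRdet.mul (Matrix.isUnit_nonsing_inv_det _ hQj1)
    have hUB : ((A j * Q j * (A j)ᵀ) * (Q (j+1))⁻¹) * B j
        = B j * (1 + (B j)ᵀ * (Q (j+1))⁻¹ * B j) := by
      rw [hU, Matrix.add_mul, Matrix.one_mul, Matrix.mul_add, Matrix.mul_one]
      rw [Matrix.mul_assoc, Matrix.mul_assoc, ← Matrix.mul_assoc ((B j)ᵀ)]
    have hT : IsUnit ((1 : Matrix (Fin m) (Fin m) ℝ) + (B j)ᵀ * (Q (j+1))⁻¹ * B j).det :=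
      hIB j hj
    have hBT : B j * ((1 : Matrix (Fin m) (Fin m) ℝ) + (B j)ᵀ * (Q (j+1))⁻¹ * B j)⁻¹
        = ((A j * Q j * (A j)ᵀ) * (Q (j+1))⁻¹)⁻¹ * B j := by
      have hcan : ((A j * Q j * (A j)ᵀ) * (Q (j+1))⁻¹)⁻¹
          * (((A j * Q j * (A j)ᵀ) * (Q (j+1))⁻¹) * B j) = B j := by
        rw [← Matrix.mul_assoc, Matrix.nonsing_inv_mul _ hUdet, Matrix.one_mul]
      calc B j * ((1 : Matrix (Fin m) (Fin m) ℝ) + (B j)ᵀ * (Q (j+1))⁻¹ * B j)⁻¹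
          = ((A j * Q j * (A j)ᵀ) * (Q (j+1))⁻¹)⁻¹
            * (((A j * Q j * (A j)ᵀ) * (Q (j+1))⁻¹) * B j)
            * ((1 : Matrix (Fin m) (Fin m) ℝ) + (B j)ᵀ * (Q (j+1))⁻¹ * B j)⁻¹ := by
            rw [hcan]
        _ = ((A j * Q j * (A j)ᵀ) * (Q (j+1))⁻¹)⁻¹
            * (B j * ((1 + (B j)ᵀ * (Q (j+1))⁻¹ * B j)
              * ((1 : Matrix (Fin m) (Fin m) ℝ) + (B j)ᵀ * (Q (j+1))⁻¹ * B j)⁻¹)) := by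
            rw [hUB,
              Matrix.mul_assoc (((A j * Q j * (A j)ᵀ) * (Q (j+1))⁻¹)⁻¹),
              Matrix.mul_assoc (B j)]
        _ = ((A j * Q j * (A j)ᵀ) * (Q (j+1))⁻¹)⁻¹ * B j := by
            rw [Matrix.mul_nonsing_inv _ hT, Matrix.mul_one]
    have hRPinv : ((A j * Q j * (A j)ᵀ) * (Q (j+1))⁻¹)⁻¹
        = Q (j+1) * (A j * Q j * (A j)ᵀ)⁻¹ := by
      rw [Matrix.mul_inv_rev, Matrix.nonsing_inv_nonsing_inv _ hQj1]
    have hDval : D j = Q (j+1) * (A j * Q j * (A j)ᵀ)⁻¹ * (B j * (B j)ᵀ) := by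
      rw [hD j, hBT, hRPinv, Matrix.mul_assoc (Q (j+1) * (A j * Q j * (A j)ᵀ)⁻¹)]
    have hAQ1 : AQ j = Q (j+1) * (A j * Q j * (A j)ᵀ)⁻¹ * A j := by
      rw [hAQ j, hBT, hRPinv]
      rw [sub_eq_iff_eq_add']
      have expand : Q (j+1) * (A j * Q j * (A j)ᵀ)⁻¹ * ((A j * Q j * (A j)ᵀ) * (Q (j+1))⁻¹) * A j
          = Q (j+1) * (A j * Q j * (A j)ᵀ)⁻¹ * B j * (B j)ᵀ * (Q (j+1))⁻¹ * A j
            + Q (j+1) * (A j * Q j * (A j)ᵀ)⁻¹ * A j := by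
        rw [hU]
        have hBB : Q (j+1) * (A j * Q j * (A j)ᵀ)⁻¹ * B j * (B j)ᵀ
            = Q (j+1) * (A j * Q j * (A j)ᵀ)⁻¹ * (B j * (B j)ᵀ) := by
          rw [Matrix.mul_assoc (Q (j+1) * (A j * Q j * (A j)ᵀ)⁻¹)]
        rw [hBB]
        noncomm_ring
      have c1 : Q (j+1) * (A j * Q j * (A j)ᵀ)⁻¹ * ((A j * Q j * (A j)ᵀ) * (Q (j+1))⁻¹) = 1 := by
        rw [← Matrix.mul_assoc, Matrix.mul_assoc (Q (j+1)),
          Matrix.nonsing_inv_mul _ hRdet, Matrix.mul_one, Matrix.mul_nonsing_inv _ hQj1]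
      rw [← expand, c1, Matrix.one_mul]
    have hRinv : (A j * Q j * (A j)ᵀ)⁻¹ = ((A j)ᵀ)⁻¹ * ((Q j)⁻¹ * (A j)⁻¹) := by
      rw [Matrix.mul_inv_rev, Matrix.mul_inv_rev]
    have hAQform : AQ j = Q (j+1) * ((A j)ᵀ)⁻¹ * (Q j)⁻¹ := by
      rw [hAQ1, hRinv]
      have e : Q (j+1) * (((A j)ᵀ)⁻¹ * ((Q j)⁻¹ * (A j)⁻¹)) * A j
          = Q (j+1) * ((A j)ᵀ)⁻¹ * (Q j)⁻¹ * ((A j)⁻¹ * A j) := by noncomm_ring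
      rw [e, Matrix.nonsing_inv_mul _ hAj, Matrix.mul_one]
    have hRT : (A j * Q j * (A j)ᵀ)ᵀ = A j * Q j * (A j)ᵀ := by
      rw [Matrix.transpose_mul, Matrix.transpose_mul, Matrix.transpose_transpose,
        hQsym j (le_of_lt hj), ← Matrix.mul_assoc]
    have hAQT : (AQ j)ᵀ = (A j)ᵀ * (A j * Q j * (A j)ᵀ)⁻¹ * Q (j+1) := by
      rw [hAQ1, Matrix.transpose_mul, Matrix.transpose_mul,
        Matrix.transpose_nonsing_inv, hRT, hQsym (j+1) hj, ← Matrix.mul_assoc]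
    have e1 : AQ j * Q j * (AQ j)ᵀ
        = Q (j+1) * (A j * Q j * (A j)ᵀ)⁻¹ * Q (j+1) := by
      rw [hAQT, hAQ1]
      have s1 : Q (j+1) * (A j * Q j * (A j)ᵀ)⁻¹ * A j * Q j
            * ((A j)ᵀ * (A j * Q j * (A j)ᵀ)⁻¹ * Q (j+1))
          = Q (j+1) * (A j * Q j * (A j)ᵀ)⁻¹ * (A j * Q j * (A j)ᵀ)
            * ((A j * Q j * (A j)ᵀ)⁻¹ * Q (j+1)) := by noncomm_ring
      rw [s1, Matrix.mul_assoc (Q (j+1)), Matrix.nonsing_inv_mul _ hRdet, Matrix.mul_one,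
        ← Matrix.mul_assoc]
    refine ⟨hAQform, ?_, ?_⟩
    · rw [hDval, e1]
      have s2 : Q (j+1) * (A j * Q j * (A j)ᵀ)⁻¹ * Q (j+1)
            + Q (j+1) * (A j * Q j * (A j)ᵀ)⁻¹ * (B j * (B j)ᵀ)
          = Q (j+1) * (A j * Q j * (A j)ᵀ)⁻¹ * (Q (j+1) + B j * (B j)ᵀ) := by noncomm_ring
      rw [s2, ← hR, Matrix.mul_assoc, Matrix.nonsing_inv_mul _ hRdet, Matrix.mul_one]
    · rw [hAQ1, Matrix.det_mul, Matrix.det_mul]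
      exact (hQj1.mul (Matrix.isUnit_nonsing_inv_det _ hRdet)).mul hAj
  intro k hk
  have hQk : IsUnit (Q k).det := hQinv k hk
  have hQN : IsUnit (Q N).det := hQinv N le_rfl
  have hPhidet : IsUnit (Phi A N k).det :=
    phi_det A (fun j _ hjN => hA j hjN) N hk le_rfl
  have hPhiTdet : IsUnit ((Phi A N k)ᵀ).det := by rwa [Matrix.det_transpose]
  have hPhiQdet : IsUnit (Phi AQ N k).det :=
    phi_det AQ (fun j _ hjN => (key j hjN).2.2) N hk le_rfl
  have hPhiQTdet : IsUnit ((Phi AQ N k)ᵀ).det := by rwa [Matrix.det_transpose]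
  -- closed-loop transition matrix
  have hPhiQ : ∀ j, k ≤ j → j ≤ N →
      Phi AQ j k = Q j * ((Phi A j k)ᵀ)⁻¹ * (Q k)⁻¹ := by
    intro j hkj
    induction j, hkj using Nat.le_induction with
    | base =>
      intro _
      rw [phi_self, phi_self, Matrix.transpose_one, inv_one, Matrix.mul_one,
        Matrix.mul_nonsing_inv _ hQk]
    | succ j hj ih =>
      intro hjN
      have hjN' : j < N := hjN
      rw [phi_succ AQ hj, ih (le_of_lt hjN'), (key j hjN').1, phi_succ A hj,
        Matrix.transpose_mul, Matrix.mul_inv_rev]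
      have s : Q (j+1) * ((A j)ᵀ)⁻¹ * (Q j)⁻¹ * (Q j * ((Phi A j k)ᵀ)⁻¹ * (Q k)⁻¹)
          = Q (j+1) * ((A j)ᵀ)⁻¹ * ((Q j)⁻¹ * Q j) * ((Phi A j k)ᵀ)⁻¹ * (Q k)⁻¹ := by
        noncomm_ring
      rw [s, Matrix.nonsing_inv_mul _ (hQinv j (le_of_lt hjN')), Matrix.mul_one]
      noncomm_ring
  have hPhiQ_eq : Phi AQ N k = Q N * ((Phi A N k)ᵀ)⁻¹ * (Q k)⁻¹ := hPhiQ N hk le_rfl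
  -- Gramian closed forms
  have hGrA : GrM A (fun s => B s * (B s)ᵀ) N k
      = Phi A N k * Q k * (Phi A N k)ᵀ - Q N := by
    have h0 := gram_rec A Q (fun s => -(B s * (B s)ᵀ)) hk
      (fun j _ hjN => by rw [hQrec j hjN, sub_eq_add_neg])
    rw [GrM_neg] at h0
    rw [h0]; abel
  have hGrQ : GrM AQ D N k = Q N - Phi AQ N k * Q k * (Phi AQ N k)ᵀ := by
    have h0 := gram_rec AQ Q D hk (fun j _ hjN => (key j hjN).2.1)
    rw [h0]; abel
  have hGc : GcM A (fun s => B s * (B s)ᵀ) N k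
      = Q k - (Phi A N k)⁻¹ * Q N * ((Phi A N k)ᵀ)⁻¹ := by
    rw [gcm_eq A _ hk (fun j _ hjN => hA j hjN), hGrA,
      alg3 _ _ _ _ _ _ (Matrix.nonsing_inv_mul _ hPhidet) (Matrix.mul_nonsing_inv _ hPhiTdet)]
  have hPQi : (Phi AQ N k)⁻¹ = Q k * (Phi A N k)ᵀ * (Q N)⁻¹ := by
    apply Matrix.inv_eq_right_inv
    rw [hPhiQ_eq]
    have s : Q N * ((Phi A N k)ᵀ)⁻¹ * (Q k)⁻¹ * (Q k * (Phi A N k)ᵀ * (Q N)⁻¹)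
        = Q N * (((Phi A N k)ᵀ)⁻¹ * (((Q k)⁻¹ * Q k) * (Phi A N k)ᵀ)) * (Q N)⁻¹ := by
      noncomm_ring
    rw [s, Matrix.nonsing_inv_mul _ hQk, Matrix.one_mul,
      Matrix.nonsing_inv_mul _ hPhiTdet, Matrix.mul_one, Matrix.mul_nonsing_inv _ hQN]
  have hPQti : ((Phi AQ N k)ᵀ)⁻¹ = (Q N)⁻¹ * Phi A N k * Q k := by
    rw [← Matrix.transpose_nonsing_inv, hPQi, Matrix.transpose_mul, Matrix.transpose_mul,
      Matrix.transpose_nonsing_inv, hQsym N le_rfl, Matrix.transpose_transpose,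
      hQsym k hk, ← Matrix.mul_assoc]
  have hGcQ : GcM AQ D N k
      = Q k * ((Phi A N k)ᵀ * (Q N)⁻¹ * Phi A N k) * Q k - Q k := by
    rw [gcm_eq AQ D hk (fun j _ hjN => (key j hjN).2.2), hGrQ,
      alg4 _ _ _ _ _ _ (Matrix.nonsing_inv_mul _ hPhiQdet) (Matrix.mul_nonsing_inv _ hPhiQTdet),
      hPQi, hPQti]
    have s : Q k * (Phi A N k)ᵀ * (Q N)⁻¹ * Q N * ((Q N)⁻¹ * Phi A N k * Q k)
        = Q k * ((Phi A N k)ᵀ * (((Q N)⁻¹ * Q N) * ((Q N)⁻¹ * Phi A N k))) * Q k := by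
      noncomm_ring
    rw [s, Matrix.nonsing_inv_mul _ hQN, Matrix.one_mul]
    noncomm_ring
  have hxy : (Phi A N k)⁻¹ * Q N * ((Phi A N k)ᵀ)⁻¹
      * ((Phi A N k)ᵀ * (Q N)⁻¹ * Phi A N k) = 1 := by
    have s : (Phi A N k)⁻¹ * Q N * ((Phi A N k)ᵀ)⁻¹ * ((Phi A N k)ᵀ * (Q N)⁻¹ * Phi A N k)
        = (Phi A N k)⁻¹ * (Q N * ((((Phi A N k)ᵀ)⁻¹ * (Phi A N k)ᵀ) * (Q N)⁻¹)) * Phi A N k := by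
      noncomm_ring
    rw [s, Matrix.nonsing_inv_mul _ hPhiTdet, Matrix.one_mul,
      Matrix.mul_nonsing_inv _ hQN, Matrix.mul_one, Matrix.nonsing_inv_mul _ hPhidet]
  constructor
  · rw [hGc, hGcQ, hPhiQ_eq]
    exact alg1 _ _ _ _ _ _ _ _ (Matrix.mul_nonsing_inv _ hPhidet)
      (Matrix.nonsing_inv_mul _ hPhiTdet) (Matrix.nonsing_inv_mul _ hQk)
      (Matrix.mul_nonsing_inv _ hQN)
  · rw [hGc, hGcQ]
    exact alg2 _ _ _ _ hxy (Matrix.mul_nonsing_inv _ hQk) (Matrix.nonsing_inv_mul _ hQk)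

end
end

section
/- Equality of the pinned-process drive coefficients of the original and closed-loop systems (identity (eq:final_coef) in the proof of Theorem 3, part (ii)): for every k ∈ {0,…,N−1}, B_kB_kᵀΦ(N,k+1)ᵀG_r(N,k)† = D_kΦ_Q(N,k+1)ᵀG_{Q,r}(N,k)†, where G_r(N,k) := Σ_{s=k}^{N−1}Φ(N,s+1)B_sB_sᵀΦ(N,s+1)ᵀ, G_{Q,r}(N,k) := Σ_{s=k}^{N−1}Φ_Q(N,s+1)D_sΦ_Q(N,s+1)ᵀ, and † denotes the Moore–Penrose inverse. -/
open Matrix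

noncomputable section

section AuxLemmas

lemma prodAux_succ' {n : ℕ} (A : ℕ → Matrix (Fin n) (Fin n) ℝ) (l d : ℕ) :
    prodAux A l (d+1) = prodAux A (l+1) d * A l := by
  induction d with
  | zero => simp [prodAux]
  | succ d ih =>
      show A (l + (d+1)) * prodAux A l (d+1) = prodAux A (l+1) (d+1) * A l
      rw [ih]
      show A (l + (d+1)) * (prodAux A (l+1) d * A l)
        = A (l + 1 + d) * prodAux A (l+1) d * A l
      rw [Matrix.mul_assoc]
      have h : l + (d+1) = l + 1 + d := by omega
      rw [h]

lemma Phi_self {n : ℕ} (A : ℕ → Matrix (Fin n) (Fin n) ℝ) (N : ℕ) :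
    Phi A N N = 1 := by
  simp [Phi, prodAux]

lemma Phi_step {n N : ℕ} (A : ℕ → Matrix (Fin n) (Fin n) ℝ) {s : ℕ} (hs : s < N) :
    Phi A N s = Phi A N (s+1) * A s := by
  rw [Phi, Phi, if_pos (by omega), if_pos (by omega)]
  have h : N - s = (N - (s+1)) + 1 := by omega
  rw [h, prodAux_succ']

lemma Phi_isUnit {n N : ℕ} {A : ℕ → Matrix (Fin n) (Fin n) ℝ}
    (hA : ∀ s < N, IsUnit (A s).det) : ∀ s ≤ N, IsUnit (Phi A N s).det := by
  have key : ∀ d s, s + d = N → IsUnit (Phi A N s).det := by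
    intro d
    induction d with
    | zero =>
        intro s hs
        have h : s = N := by omega
        rw [h, Phi_self]
        simp
    | succ d ih =>
        intro s hs
        rw [Phi_step A (by omega : s < N), Matrix.det_mul]
        exact ((ih (s+1) (by omega)).mul (hA s (by omega)))
  intro s hs; exact key (N - s) s (by omega)

lemma tele_up {n : ℕ} (f : ℕ → Matrix (Fin n) (Fin n) ℝ) :
    ∀ {a b : ℕ}, a ≤ b → ∑ s ∈ Finset.Ico a b, (f (s+1) - f s) = f b - f a := by
  intro a b h
  induction b with
  | zero => have : a = 0 := by omega
            subst this; simp
  | succ b ih =>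
      rcases Nat.lt_or_ge a (b+1) with h1 | h1
      · have h2 : a ≤ b := by omega
        rw [Finset.sum_Ico_succ_top h2, ih h2]
        abel
      · have : a = b + 1 := by omega
        subst this; simp

lemma tele_down {n : ℕ} (f : ℕ → Matrix (Fin n) (Fin n) ℝ) :
    ∀ {a b : ℕ}, a ≤ b → ∑ s ∈ Finset.Ico a b, (f s - f (s+1)) = f a - f b := by
  intro a b h
  induction b with
  | zero => have : a = 0 := by omega
            subst this; simp
  | succ b ih =>
      rcases Nat.lt_or_ge a (b+1) with h1 | h1
      · have h2 : a ≤ b := by omega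
        rw [Finset.sum_Ico_succ_top h2, ih h2]
        abel
      · have : a = b + 1 := by omega
        subst this; simp

lemma sum_mul_transpose_eq_zero {n m : ℕ} (S : Finset ℕ) (K : ℕ → Matrix (Fin n) (Fin m) ℝ)
    (h : ∑ s ∈ S, K s * (K s)ᵀ = 0) : ∀ s ∈ S, K s = 0 := by
  have htr : ∀ s, Matrix.trace (K s * (K s)ᵀ) = ∑ i, ∑ j, (K s i j)^2 := by
    intro s
    simp [Matrix.trace, Matrix.diag, Matrix.mul_apply, Matrix.transpose_apply, sq]
  have h0 : ∑ s ∈ S, Matrix.trace (K s * (K s)ᵀ) = 0 := by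
    rw [← Matrix.trace_sum, h, Matrix.trace_zero]
  have hnn : ∀ s ∈ S, (0:ℝ) ≤ Matrix.trace (K s * (K s)ᵀ) := by
    intro s _; rw [htr]; positivity
  intro s hs
  have h1 := (Finset.sum_eq_zero_iff_of_nonneg hnn).mp h0 s hs
  rw [htr] at h1
  ext i j
  have h2 := (Finset.sum_eq_zero_iff_of_nonneg
    (fun i _ => Finset.sum_nonneg fun j _ => sq_nonneg _)).mp h1 i (Finset.mem_univ i)
  have h3 := (Finset.sum_eq_zero_iff_of_nonneg
    (fun j _ => sq_nonneg _)).mp h2 j (Finset.mem_univ j)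
  simpa using sq_eq_zero_iff.mp h3

lemma mp_unique {n : ℕ} {G H1 H2 : Matrix (Fin n) (Fin n) ℝ}
    (h1 : IsMoorePenrose G H1) (h2 : IsMoorePenrose G H2) : H1 = H2 := by
  obtain ⟨a1, b1, c1, d1⟩ := h1
  obtain ⟨a2, b2, c2, d2⟩ := h2
  have e1 : G * H1 = G * H2 := by
    calc G * H1 = (G * H1)ᵀ := c1.symm
      _ = ((G * H2 * G) * H1)ᵀ := by rw [a2]
      _ = ((G * H2) * (G * H1))ᵀ := by simp only [Matrix.mul_assoc]
      _ = (G * H1)ᵀ * (G * H2)ᵀ := by rw [Matrix.transpose_mul]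
      _ = (G * H1) * (G * H2) := by rw [c1, c2]
      _ = (G * H1 * G) * H2 := by simp only [Matrix.mul_assoc]
      _ = G * H2 := by rw [a1]
  have e2 : H1 * G = H2 * G := by
    calc H1 * G = (H1 * G)ᵀ := d1.symm
      _ = (H1 * (G * H2 * G))ᵀ := by rw [a2]
      _ = ((H1 * G) * (H2 * G))ᵀ := by simp only [Matrix.mul_assoc]
      _ = (H2 * G)ᵀ * (H1 * G)ᵀ := by rw [Matrix.transpose_mul]
      _ = (H2 * G) * (H1 * G) := by rw [d1, d2]
      _ = H2 * (G * H1 * G) := by simp only [Matrix.mul_assoc]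
      _ = H2 * G := by rw [a1]
  calc H1 = H1 * G * H1 := b1.symm
    _ = H2 * G * H1 := by rw [e2]
    _ = H2 * (G * H1) := by rw [Matrix.mul_assoc]
    _ = H2 * (G * H2) := by rw [e1]
    _ = H2 * G * H2 := by rw [Matrix.mul_assoc]
    _ = H2 := b2

lemma mp_transpose {n : ℕ} {G H : Matrix (Fin n) (Fin n) ℝ}
    (h : IsMoorePenrose G H) : IsMoorePenrose Gᵀ Hᵀ := by
  obtain ⟨a, b, c, d⟩ := h
  refine ⟨?_, ?_, ?_, ?_⟩
  · rw [← Matrix.transpose_mul, ← Matrix.transpose_mul, ← Matrix.mul_assoc, a]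
  · rw [← Matrix.transpose_mul, ← Matrix.transpose_mul, ← Matrix.mul_assoc, b]
  · rw [← Matrix.transpose_mul, Matrix.transpose_transpose, d]
  · rw [← Matrix.transpose_mul, Matrix.transpose_transpose, c]

lemma mp_symm {n : ℕ} {G H : Matrix (Fin n) (Fin n) ℝ} (hG : Gᵀ = G)
    (h : IsMoorePenrose G H) : Hᵀ = H := by
  have := mp_transpose h
  rw [hG] at this
  exact mp_unique this h

end AuxLemmas

/-- Equality of the pinned-process drive coefficients of the original and closed-loop systems. -/
theorem stmt18
    {n m N : ℕ} (hn : 0 < n) (hm : 0 < m) (hN : 0 < N)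
    (A : ℕ → Matrix (Fin n) (Fin n) ℝ) (B : ℕ → Matrix (Fin n) (Fin m) ℝ)
    (hA : ∀ k < N, IsUnit (A k).det)
    (Q : ℕ → Matrix (Fin n) (Fin n) ℝ)
    (hQsym : ∀ k ≤ N, (Q k)ᵀ = Q k) (hQinv : ∀ k ≤ N, IsUnit (Q k).det)
    (hQrec : ∀ k < N, Q (k+1) = A k * Q k * (A k)ᵀ - B k * (B k)ᵀ)
    (hIB : ∀ k < N,
      IsUnit ((1 : Matrix (Fin m) (Fin m) ℝ) + (B k)ᵀ * (Q (k+1))⁻¹ * B k).det)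
    (D : ℕ → Matrix (Fin n) (Fin n) ℝ)
    (hD : ∀ k, D k = B k *
      ((1 : Matrix (Fin m) (Fin m) ℝ) + (B k)ᵀ * (Q (k+1))⁻¹ * B k)⁻¹ * (B k)ᵀ)
    (AQ : ℕ → Matrix (Fin n) (Fin n) ℝ)
    (hAQ : ∀ k, AQ k = A k - B k *
      ((1 : Matrix (Fin m) (Fin m) ℝ) + (B k)ᵀ * (Q (k+1))⁻¹ * B k)⁻¹ *
      (B k)ᵀ * (Q (k+1))⁻¹ * A k)
    -- `Grd k` is the Moore–Penrose inverse of `G_r(N,k)`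
    (Grd : ℕ → Matrix (Fin n) (Fin n) ℝ)
    (hGrd : ∀ k < N, IsMoorePenrose (GrM A (fun s => B s * (B s)ᵀ) N k) (Grd k))
    -- `GQrd k` is the Moore–Penrose inverse of `G_{Q,r}(N,k)`
    (GQrd : ℕ → Matrix (Fin n) (Fin n) ℝ)
    (hGQrd : ∀ k < N, IsMoorePenrose (GrM AQ D N k) (GQrd k)) :
    ∀ k < N,
      B k * (B k)ᵀ * (Phi A N (k+1))ᵀ * Grd k
        = D k * (Phi AQ N (k+1))ᵀ * GQrd k := by
  intro k hk
  have hQN : IsUnit (Q N).det := hQinv N le_rfl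
  have hTu : ∀ s ≤ N, IsUnit (Phi A N s).det := Phi_isUnit hA
  have hPu : ∀ s, s < N → IsUnit (A s * Q s * (A s)ᵀ).det := by
    intro s hs
    rw [Matrix.det_mul, Matrix.det_mul, Matrix.det_transpose]
    exact ((hA s hs).mul (hQinv s (le_of_lt hs))).mul (hA s hs)
  have hQP : ∀ s, s < N → Q (s+1) + B s * (B s)ᵀ = A s * Q s * (A s)ᵀ := by
    intro s hs; rw [hQrec s hs]; abel
  have hBB : ∀ s, s < N → B s * (B s)ᵀ = A s * Q s * (A s)ᵀ - Q (s+1) := by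
    intro s hs; rw [hQrec s hs]; abel
  -- key push-through identity
  have hKey : ∀ s, s < N →
      ((1 : Matrix (Fin m) (Fin m) ℝ) + (B s)ᵀ * (Q (s+1))⁻¹ * B s)⁻¹ * (B s)ᵀ
        = (B s)ᵀ * (A s * Q s * (A s)ᵀ)⁻¹ * Q (s+1) := by
    intro s hs
    have hQ' : IsUnit (Q (s+1)).det := hQinv (s+1) hs
    have hW := hIB s hs
    have e : (B s)ᵀ * ((Q (s+1))⁻¹ * (A s * Q s * (A s)ᵀ))
        = ((1 : Matrix (Fin m) (Fin m) ℝ) + (B s)ᵀ * (Q (s+1))⁻¹ * B s) * (B s)ᵀ := by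
      rw [← hQP s hs]
      simp only [Matrix.mul_add, Matrix.add_mul, one_mul, Matrix.one_mul, Matrix.mul_assoc,
        Matrix.nonsing_inv_mul _ hQ', Matrix.mul_one]
    have e3 : ((1 : Matrix (Fin m) (Fin m) ℝ) + (B s)ᵀ * (Q (s+1))⁻¹ * B s) *
        ((B s)ᵀ * (A s * Q s * (A s)ᵀ)⁻¹ * Q (s+1)) = (B s)ᵀ := by
      calc ((1 : Matrix (Fin m) (Fin m) ℝ) + (B s)ᵀ * (Q (s+1))⁻¹ * B s) *
          ((B s)ᵀ * (A s * Q s * (A s)ᵀ)⁻¹ * Q (s+1))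
          = (((1 : Matrix (Fin m) (Fin m) ℝ) + (B s)ᵀ * (Q (s+1))⁻¹ * B s) * (B s)ᵀ) *
            ((A s * Q s * (A s)ᵀ)⁻¹ * Q (s+1)) := by simp only [Matrix.mul_assoc]
        _ = ((B s)ᵀ * ((Q (s+1))⁻¹ * (A s * Q s * (A s)ᵀ))) *
            ((A s * Q s * (A s)ᵀ)⁻¹ * Q (s+1)) := by rw [e]
        _ = (B s)ᵀ * ((Q (s+1))⁻¹ *
            ((A s * Q s * (A s)ᵀ) * ((A s * Q s * (A s)ᵀ)⁻¹ * Q (s+1)))) := by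
              simp only [Matrix.mul_assoc]
        _ = (B s)ᵀ * ((Q (s+1))⁻¹ * Q (s+1)) := by
              rw [Matrix.mul_nonsing_inv_cancel_left _ _ (hPu s hs)]
        _ = (B s)ᵀ := by rw [Matrix.nonsing_inv_mul _ hQ', Matrix.mul_one]
    have e4 := congrArg (fun X =>
      ((1 : Matrix (Fin m) (Fin m) ℝ) + (B s)ᵀ * (Q (s+1))⁻¹ * B s)⁻¹ * X) e3
    rw [Matrix.nonsing_inv_mul_cancel_left _ _ hW] at e4
    exact e4.symm
  have hDf : ∀ s, s < N →
      D s = B s * ((B s)ᵀ * (A s * Q s * (A s)ᵀ)⁻¹ * Q (s+1)) := by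
    intro s hs
    rw [hD s, Matrix.mul_assoc, hKey s hs]
  have hDf2 : ∀ s, s < N →
      D s = Q (s+1) - Q (s+1) * (A s * Q s * (A s)ᵀ)⁻¹ * Q (s+1) := by
    intro s hs
    rw [hDf s hs]
    calc B s * ((B s)ᵀ * (A s * Q s * (A s)ᵀ)⁻¹ * Q (s+1))
        = (B s * (B s)ᵀ) * ((A s * Q s * (A s)ᵀ)⁻¹ * Q (s+1)) := by
          simp only [Matrix.mul_assoc]
      _ = (A s * Q s * (A s)ᵀ - Q (s+1)) * ((A s * Q s * (A s)ᵀ)⁻¹ * Q (s+1)) := by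
          rw [hBB s hs]
      _ = (A s * Q s * (A s)ᵀ) * ((A s * Q s * (A s)ᵀ)⁻¹ * Q (s+1))
          - Q (s+1) * ((A s * Q s * (A s)ᵀ)⁻¹ * Q (s+1)) := by rw [Matrix.sub_mul]
      _ = Q (s+1) - Q (s+1) * (A s * Q s * (A s)ᵀ)⁻¹ * Q (s+1) := by
          rw [Matrix.mul_nonsing_inv_cancel_left _ _ (hPu s hs)]
          simp only [Matrix.mul_assoc]
  have hAQf : ∀ s, s < N → AQ s = Q (s+1) * ((A s)ᵀ)⁻¹ * (Q s)⁻¹ := by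
    intro s hs
    have hQ' : IsUnit (Q (s+1)).det := hQinv (s+1) hs
    have hAs := hA s hs
    have hQs := hQinv s (le_of_lt hs)
    rw [hAQ s, ← hD s, hDf2 s hs]
    calc A s - (Q (s+1) - Q (s+1) * (A s * Q s * (A s)ᵀ)⁻¹ * Q (s+1)) * (Q (s+1))⁻¹ * A s
        = A s - (Q (s+1) * ((Q (s+1))⁻¹ * A s)
            - Q (s+1) * (A s * Q s * (A s)ᵀ)⁻¹ * (Q (s+1) * ((Q (s+1))⁻¹ * A s))) := by
          simp only [Matrix.sub_mul, Matrix.mul_assoc]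
      _ = A s - (A s - Q (s+1) * (A s * Q s * (A s)ᵀ)⁻¹ * A s) := by
          rw [Matrix.mul_nonsing_inv_cancel_left _ _ hQ']
      _ = Q (s+1) * (A s * Q s * (A s)ᵀ)⁻¹ * A s := by abel
      _ = Q (s+1) * ((A s)ᵀ)⁻¹ * (Q s)⁻¹ := by
          rw [Matrix.mul_inv_rev, Matrix.mul_inv_rev]
          simp only [Matrix.mul_assoc]
          rw [Matrix.nonsing_inv_mul _ hAs, Matrix.mul_one]
  have hAQu : ∀ s, s < N → IsUnit (AQ s).det := by
    intro s hs
    rw [hAQf s hs, Matrix.det_mul, Matrix.det_mul]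
    exact ((hQinv (s+1) hs).mul (Matrix.isUnit_nonsing_inv_det _
      (by rw [Matrix.det_transpose]; exact hA s hs))).mul
      (Matrix.isUnit_nonsing_inv_det _ (hQinv s (le_of_lt hs)))
  have hTQu : ∀ s ≤ N, IsUnit (Phi AQ N s).det := Phi_isUnit hAQu
  -- closed-loop transition matrix formula
  have hPhiQ : ∀ s, s ≤ N → Phi AQ N s = Q N * ((Phi A N s)ᵀ)⁻¹ * (Q s)⁻¹ := by
    have key : ∀ d s, s + d = N → Phi AQ N s = Q N * ((Phi A N s)ᵀ)⁻¹ * (Q s)⁻¹ := by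
      intro d
      induction d with
      | zero =>
          intro s hs
          have h : s = N := by omega
          rw [h, Phi_self, Phi_self]
          simp [Matrix.mul_nonsing_inv _ hQN]
      | succ d ih =>
          intro s hs
          have hsN : s < N := by omega
          rw [Phi_step AQ hsN, ih (s+1) (by omega), hAQf s hsN, Phi_step A hsN]
          rw [Matrix.transpose_mul, Matrix.mul_inv_rev]
          simp only [Matrix.mul_assoc]
          rw [Matrix.nonsing_inv_mul_cancel_left _ _ (hQinv (s+1) hsN)]
    intro s hs; exact key (N - s) s (by omega)
  have hTransQ : ∀ s, s ≤ N → (Phi AQ N s)ᵀ = (Q s)⁻¹ * ((Phi A N s)⁻¹ * Q N) := by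
    intro s hs
    rw [hPhiQ s hs]
    simp only [Matrix.transpose_mul, Matrix.transpose_nonsing_inv,
      Matrix.transpose_transpose, hQsym N le_rfl, hQsym s hs, Matrix.mul_assoc]
  have hFP : ∀ s, s < N → Phi A N s * Q s * (Phi A N s)ᵀ
      = Phi A N (s+1) * (A s * Q s * (A s)ᵀ) * (Phi A N (s+1))ᵀ := by
    intro s hs
    rw [Phi_step A hs, Matrix.transpose_mul]
    simp only [Matrix.mul_assoc]
  -- the original Gramian, telescoped
  have hG : GrM A (fun s => B s * (B s)ᵀ) N k
      = Phi A N k * Q k * (Phi A N k)ᵀ - Q N := by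
    have hterm : ∀ s ∈ Finset.Ico k N,
        Phi A N (s+1) * ((fun s => B s * (B s)ᵀ) s) * (Phi A N (s+1))ᵀ
          = (fun s => Phi A N s * Q s * (Phi A N s)ᵀ) s
            - (fun s => Phi A N s * Q s * (Phi A N s)ᵀ) (s+1) := by
      intro s hsmem
      have hs : s < N := (Finset.mem_Ico.mp hsmem).2
      simp only []
      rw [hBB s hs, hFP s hs]
      simp only [Matrix.mul_sub, Matrix.sub_mul]
    rw [GrM, Finset.sum_congr rfl hterm,
      tele_down (fun s => Phi A N s * Q s * (Phi A N s)ᵀ) (le_of_lt hk)]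
    rw [Phi_self]
    simp
  -- the closed-loop Gramian, telescoped
  have hGQ : GrM AQ D N k
      = Q N - Q N * (Phi A N k * Q k * (Phi A N k)ᵀ)⁻¹ * Q N := by
    have hterm : ∀ s ∈ Finset.Ico k N,
        Phi AQ N (s+1) * D s * (Phi AQ N (s+1))ᵀ
          = (fun s => Q N - Q N * (Phi A N s * Q s * (Phi A N s)ᵀ)⁻¹ * Q N) s
            - (fun s => Q N - Q N * (Phi A N s * Q s * (Phi A N s)ᵀ)⁻¹ * Q N) (s+1) := by
      intro s hsmem
      have hs : s < N := (Finset.mem_Ico.mp hsmem).2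
      have hs1 : s + 1 ≤ N := hs
      have hQ' : IsUnit (Q (s+1)).det := hQinv (s+1) hs
      simp only []
      rw [hTransQ (s+1) hs1, hPhiQ (s+1) hs1, hDf2 s hs, hFP s hs]
      simp only [Matrix.mul_sub, Matrix.sub_mul, Matrix.mul_inv_rev, Matrix.mul_assoc,
        Matrix.nonsing_inv_mul_cancel_left _ _ hQ',
        Matrix.mul_nonsing_inv_cancel_left _ _ hQ',
        Matrix.nonsing_inv_mul _ hQ', Matrix.mul_nonsing_inv _ hQ',
        Matrix.mul_one, Matrix.one_mul, mul_one, one_mul]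
      abel
    rw [GrM, Finset.sum_congr rfl hterm,
      tele_down (fun s => Q N - Q N * (Phi A N s * Q s * (Phi A N s)ᵀ)⁻¹ * Q N)
        (le_of_lt hk)]
    rw [Phi_self]
    simp [Matrix.mul_nonsing_inv _ hQN]
  -- abbreviations and unit facts
  have hk1 : k + 1 ≤ N := hk
  have hQ' : IsUnit (Q (k+1)).det := hQinv (k+1) hk
  have hT'u : IsUnit (Phi A N (k+1)).det := hTu (k+1) hk1
  have hT'tu : IsUnit ((Phi A N (k+1))ᵀ).det := by
    rw [Matrix.det_transpose]; exact hT'u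
  have hFu : IsUnit (Phi A N k * Q k * (Phi A N k)ᵀ).det := by
    rw [Matrix.det_mul, Matrix.det_mul, Matrix.det_transpose]
    exact ((hTu k (le_of_lt hk)).mul (hQinv k (le_of_lt hk))).mul (hTu k (le_of_lt hk))
  obtain ⟨g1, g2, g3, g4⟩ := hGrd k hk
  obtain ⟨q1, q2, q3, q4⟩ := hGQrd k hk
  have hMP := hGrd k hk
  set S := Phi A N k * Q k * (Phi A N k)ᵀ with hSdef
  set G := GrM A (fun s => B s * (B s)ᵀ) N k with hGdef
  set GQ := GrM AQ D N k with hGQdef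
  have hSsym : Sᵀ = S := by
    rw [hSdef]
    simp only [Matrix.transpose_mul, Matrix.transpose_transpose,
      hQsym k (le_of_lt hk), Matrix.mul_assoc]
  have hGsym : Gᵀ = G := by
    rw [hG, Matrix.transpose_sub, hQsym N le_rfl, hSsym]
  -- the two Gramians generate the same column space
  have hGQC : GQ = G * (S⁻¹ * Q N) := by
    rw [hGQ, hG, Matrix.sub_mul, Matrix.mul_nonsing_inv_cancel_left _ _ hFu]
    simp only [Matrix.mul_assoc]
  have hGC : G = GQ * ((Q N)⁻¹ * S) := by
    rw [hGQC]
    simp only [Matrix.mul_assoc, Matrix.mul_nonsing_inv_cancel_left _ _ hQN]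
    rw [Matrix.nonsing_inv_mul _ hFu, Matrix.mul_one]
  -- range argument : G * Grd k acts as identity on the k-th drive column space
  have hGsum : G = ∑ s ∈ Finset.Ico k N,
      (Phi A N (s+1) * B s) * (Phi A N (s+1) * B s)ᵀ := by
    rw [hGdef, GrM]
    apply Finset.sum_congr rfl
    intro s _
    simp only [Matrix.transpose_mul, Matrix.mul_assoc]
  have hMzero : (1 - G * Grd k) * (Phi A N (k+1) * B k) = 0 := by
    apply sum_mul_transpose_eq_zero (Finset.Ico k N)
      (fun s => (1 - G * Grd k) * (Phi A N (s+1) * B s)) ?_ k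
      (Finset.mem_Ico.mpr ⟨le_rfl, hk⟩)
    calc ∑ s ∈ Finset.Ico k N,
          ((1 - G * Grd k) * (Phi A N (s+1) * B s)) *
            ((1 - G * Grd k) * (Phi A N (s+1) * B s))ᵀ
        = ∑ s ∈ Finset.Ico k N,
          ((1 - G * Grd k) * ((Phi A N (s+1) * B s) * (Phi A N (s+1) * B s)ᵀ)) *
            (1 - G * Grd k)ᵀ := by
          apply Finset.sum_congr rfl
          intro s _
          simp only [Matrix.transpose_mul, Matrix.mul_assoc]
      _ = ((1 - G * Grd k) * ∑ s ∈ Finset.Ico k N,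
            (Phi A N (s+1) * B s) * (Phi A N (s+1) * B s)ᵀ) * (1 - G * Grd k)ᵀ := by
          rw [← Finset.sum_mul, ← Finset.mul_sum]
      _ = ((1 - G * Grd k) * G) * (1 - G * Grd k)ᵀ := by rw [← hGsum]
      _ = 0 := by
          rw [Matrix.sub_mul, Matrix.one_mul, g1, sub_self, Matrix.zero_mul]
  have hproj : G * Grd k * (Phi A N (k+1) * B k) = Phi A N (k+1) * B k := by
    rw [Matrix.sub_mul, Matrix.one_mul, sub_eq_zero] at hMzero
    exact hMzero.symm
  have ht : (Phi A N (k+1) * B k)ᵀ * (G * Grd k) = (Phi A N (k+1) * B k)ᵀ := by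
    rw [← g3, ← Matrix.transpose_mul, hproj]
  have hXproj : B k * (B k)ᵀ * (Phi A N (k+1))ᵀ * (G * Grd k)
      = B k * (B k)ᵀ * (Phi A N (k+1))ᵀ := by
    calc B k * (B k)ᵀ * (Phi A N (k+1))ᵀ * (G * Grd k)
        = B k * ((Phi A N (k+1) * B k)ᵀ * (G * Grd k)) := by
          rw [Matrix.transpose_mul]; simp only [Matrix.mul_assoc]
      _ = B k * (Phi A N (k+1) * B k)ᵀ := by rw [ht]
      _ = B k * (B k)ᵀ * (Phi A N (k+1))ᵀ := by
          rw [Matrix.transpose_mul, Matrix.mul_assoc]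
  have hHsym : (Grd k)ᵀ = Grd k := mp_symm hGsym hMP
  have hHG : Grd k * G = G * Grd k := by
    calc Grd k * G = (Grd k * G)ᵀ := g4.symm
      _ = Gᵀ * (Grd k)ᵀ := Matrix.transpose_mul _ _
      _ = G * Grd k := by rw [hGsym, hHsym]
  -- the two orthogonal projections agree
  have e1 : (G * Grd k) * GQ = GQ := by
    rw [hGQC]
    calc (G * Grd k) * (G * (S⁻¹ * Q N))
        = (G * Grd k * G) * (S⁻¹ * Q N) := by simp only [Matrix.mul_assoc]
      _ = G * (S⁻¹ * Q N) := by rw [g1]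
  have e2 : (GQ * GQrd k) * G = G := by
    rw [hGC]
    calc (GQ * GQrd k) * (GQ * ((Q N)⁻¹ * S))
        = (GQ * GQrd k * GQ) * ((Q N)⁻¹ * S) := by simp only [Matrix.mul_assoc]
      _ = GQ * ((Q N)⁻¹ * S) := by rw [q1]
  have h12 : (G * Grd k) * (GQ * GQrd k) = GQ * GQrd k := by
    rw [← Matrix.mul_assoc, e1]
  have h21 : (GQ * GQrd k) * (G * Grd k) = G * Grd k := by
    rw [← Matrix.mul_assoc, e2]
  have hPP : G * Grd k = GQ * GQrd k := by
    calc G * Grd k = (GQ * GQrd k) * (G * Grd k) := h21.symm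
      _ = ((GQ * GQrd k) * (G * Grd k))ᵀᵀ := (Matrix.transpose_transpose _).symm
      _ = ((G * Grd k)ᵀ * (GQ * GQrd k)ᵀ)ᵀ := by rw [Matrix.transpose_mul]
      _ = ((G * Grd k) * (GQ * GQrd k))ᵀ := by rw [g3, q3]
      _ = (GQ * GQrd k)ᵀ := by rw [h12]
      _ = GQ * GQrd k := q3
  -- identification of the drive coefficients
  have hXC : D k * (Phi AQ N (k+1))ᵀ
      = B k * (B k)ᵀ * (Phi A N (k+1))ᵀ * (S⁻¹ * Q N) := by
    rw [hTransQ (k+1) hk1, hDf k hk, hSdef, hFP k hk]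
    simp only [Matrix.mul_inv_rev, Matrix.mul_assoc,
      Matrix.mul_nonsing_inv_cancel_left _ _ hQ',
      Matrix.mul_nonsing_inv_cancel_left _ _ hT'tu]
  -- final chain
  calc B k * (B k)ᵀ * (Phi A N (k+1))ᵀ * Grd k
      = B k * (B k)ᵀ * (Phi A N (k+1))ᵀ * (Grd k * G * Grd k) := by rw [g2]
    _ = B k * (B k)ᵀ * (Phi A N (k+1))ᵀ * (Grd k * (G * Grd k)) := by
        rw [Matrix.mul_assoc (Grd k) G (Grd k)]
    _ = B k * (B k)ᵀ * (Phi A N (k+1))ᵀ * (Grd k * (GQ * GQrd k)) := by rw [hPP]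
    _ = B k * (B k)ᵀ * (Phi A N (k+1))ᵀ * (Grd k * ((G * (S⁻¹ * Q N)) * GQrd k)) := by
        rw [← hGQC]
    _ = B k * (B k)ᵀ * (Phi A N (k+1))ᵀ * ((Grd k * G) * ((S⁻¹ * Q N) * GQrd k)) := by
        simp only [Matrix.mul_assoc]
    _ = B k * (B k)ᵀ * (Phi A N (k+1))ᵀ * ((G * Grd k) * ((S⁻¹ * Q N) * GQrd k)) := by
        rw [hHG]
    _ = (B k * (B k)ᵀ * (Phi A N (k+1))ᵀ * (G * Grd k)) * ((S⁻¹ * Q N) * GQrd k) := by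
        simp only [Matrix.mul_assoc]
    _ = B k * (B k)ᵀ * (Phi A N (k+1))ᵀ * ((S⁻¹ * Q N) * GQrd k) := by rw [hXproj]
    _ = (B k * (B k)ᵀ * (Phi A N (k+1))ᵀ * (S⁻¹ * Q N)) * GQrd k := by
        simp only [Matrix.mul_assoc]
    _ = D k * (Phi AQ N (k+1))ᵀ * GQrd k := by rw [← hXC]


end
end
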